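/- arXiv:2509.23521 — 8 statements merged into one kernel-verified Lean document; each statement's English description precedes it below -/
import Mathlib

section
/- Fix α ∈ 𝒜. For every p ∈ 𝕜[V] and every integer k ≥ 0, one has p ∈ Q_{k+1}(W_α) if and only if there exists h ∈ Q_k(W_α) with p − s_α(p) = α²·h. Consequently, the map ι: 𝕜[V]/⟨α⟩ → Q_k(W_α)/α²Q_k(W_α) sending the class of p to the class of ½(p + s_α(p)) is a well-defined ring homomorphism, and the first projection (q, r) ↦ q is a ring isomorphism from the fiber product Q_k(W_α) ×_{Q_k(W_α)/α²Q_k(W_α)} 𝕜[V]/⟨α⟩ (formed with respect to the canonical quotient map and ι) onto the subring Q_{k+1}(W_α) of 𝕜[V]. -/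
/-!
STATEMENT 0.  Fix α ∈ 𝒜.  For every p ∈ 𝕜[V] and every integer k ≥ 0,
p ∈ Q_{k+1}(W_α) iff there exists h ∈ Q_k(W_α) with p − s_α(p) = α²·h.
Consequently the map ι : 𝕜[V]/⟨α⟩ → Q_k(W_α)/α²Q_k(W_α), [p] ↦ [½(p + s_α(p))],
is a well-defined ring homomorphism, and the first projection (q, r) ↦ q is a ring
isomorphism from the fiber product Q_k(W_α) ×_{Q_k(W_α)/α²Q_k(W_α)} 𝕜[V]/⟨α⟩
(formed with respect to the canonical quotient map and ι) onto the subring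
Q_{k+1}(W_α) of 𝕜[V].
-/

namespace Statement0

variable {K R W A : Type*}

/-- The ring of quasi-invariants `Q_k(W_α)` of a single reflection,
as a subring of `R` (= 𝕜[V]). -/
def QaSubring [CommRing R] [Group W] [MulSemiringAction W R]
    (a : A → R) (s : A → W) (α : A) (k : ℕ) : Subring R where
  carrier := {p : R | a α ^ (2 * k) ∣ s α • p - p}
  zero_mem' := by simp
  one_mem' := by simp
  add_mem' := by
    intro p q hp hq
    have h : s α • (p + q) - (p + q) = (s α • p - p) + (s α • q - q) := by
      rw [smul_add]; ring
    show a α ^ (2 * k) ∣ s α • (p + q) - (p + q)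
    rw [h]
    exact dvd_add hp hq
  neg_mem' := by
    intro p hp
    have h : s α • (-p) - (-p) = -(s α • p - p) := by rw [smul_neg]; ring
    show a α ^ (2 * k) ∣ s α • (-p) - (-p)
    rw [h]
    exact dvd_neg.mpr hp
  mul_mem' := by
    intro p q hp hq
    have h : s α • (p * q) - p * q
        = (s α • p) * (s α • q - q) + (s α • p - p) * q := by
      rw [smul_mul']; ring
    show a α ^ (2 * k) ∣ s α • (p * q) - p * q
    rw [h]
    exact dvd_add (Dvd.dvd.mul_left hq _) (Dvd.dvd.mul_right hp _)

theorem mem_QaSubring [CommRing R] [Group W] [MulSemiringAction W R]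
    (a : A → R) (s : A → W) (α : A) (k : ℕ) (p : R) :
    p ∈ QaSubring a s α k ↔ a α ^ (2 * k) ∣ s α • p - p := Iff.rfl

/-- `α²` is an element of `Q_k(W_α)` for every `k`. -/
theorem sq_mem [CommRing R] [Group W] [MulSemiringAction W R]
    (a : A → R) (s : A → W) (α : A) (hsa : s α • a α = - a α) (k : ℕ) :
    a α ^ 2 ∈ QaSubring a s α k := by
  show a α ^ (2 * k) ∣ s α • a α ^ 2 - a α ^ 2
  have h : s α • a α ^ 2 = a α ^ 2 := by
    rw [pow_two, smul_mul', hsa, neg_mul_neg]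
  rw [h, sub_self]
  exact dvd_zero _

/-- the symmetrization ½(p + s_α(p)) lies in `Q_k(W_α)` for every `k`. -/
theorem half_mem [Field K] [CommRing R] [Algebra K R]
    [Group W] [MulSemiringAction W R] [SMulCommClass W K R]
    (a : A → R) (s : A → W) (α : A) (hs2 : s α * s α = 1) (k : ℕ) (p : R) :
    (2 : K)⁻¹ • (p + s α • p) ∈ QaSubring a s α k := by
  show a α ^ (2 * k) ∣ s α • ((2 : K)⁻¹ • (p + s α • p)) - (2 : K)⁻¹ • (p + s α • p)
  have h : s α • ((2 : K)⁻¹ • (p + s α • p)) = (2 : K)⁻¹ • (p + s α • p) := by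
    rw [smul_comm, smul_add, smul_smul, hs2, one_smul, add_comm (s α • p) p]
  rw [h, sub_self]
  exact dvd_zero _


section Aux
variable [Field K] [CharZero K] [CommRing R] [IsDomain R] [Algebra K R]
    [Group W] [MulSemiringAction W R] [SMulCommClass W K R]
    {a : A → R} {s : A → W} {α : A}

omit [IsDomain R] [Field K] [CharZero K] [Algebra K R] [SMulCommClass W K R] in
lemma aux_sq_smul (hs2 : s α * s α = 1) (p : R) : s α • s α • p = p := by
  rw [smul_smul, hs2, one_smul]

omit [IsDomain R] [Field K] [CharZero K] [Algebra K R] [SMulCommClass W K R] in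
lemma aux_smul_even_pow (hsa : s α • a α = - a α) (n : ℕ) :
    s α • a α ^ (2 * n) = a α ^ (2 * n) := by
  rw [smul_pow', hsa, Even.neg_pow (even_two_mul n)]

omit [Field K] [CharZero K] [Algebra K R] [SMulCommClass W K R] in
lemma aux_cofactor_anti (haP : Prime (a α)) (hs2 : s α * s α = 1)
    (hsa : s α • a α = - a α) {p g : R} (n : ℕ)
    (h : s α • p - p = a α ^ (2 * n) * g) : s α • g = - g := by
  apply mul_left_cancel₀ (pow_ne_zero (2 * n) haP.ne_zero)
  have h1 : s α • (s α • p - p) = p - s α • p := by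
    rw [smul_sub, aux_sq_smul hs2]
  rw [h, smul_mul', aux_smul_even_pow hsa] at h1
  rw [h1, ← neg_sub (s α • p) p, h, mul_neg]

omit [Field K] [CharZero K] [Algebra K R] [SMulCommClass W K R] in
lemma aux_cofactor_inv (haP : Prime (a α)) (hs2 : s α * s α = 1)
    (hsa : s α • a α = - a α) {p t : R}
    (h : s α • p - p = a α * t) : s α • t = t := by
  apply mul_left_cancel₀ haP.ne_zero
  have h1 : s α • (s α • p - p) = p - s α • p := by
    rw [smul_sub, aux_sq_smul hs2]
  rw [h, smul_mul', hsa, neg_mul, neg_eq_iff_eq_neg, neg_sub] at h1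
  rw [h1, h]

end Aux

set_option maxHeartbeats 1000000 in
set_option synthInstance.maxHeartbeats 400000 in
theorem statement_0
    [Field K] [CharZero K] [CommRing R] [IsDomain R] [Algebra K R]
    [Group W] [MulSemiringAction W R] [SMulCommClass W K R]
    (a : A → R) (s : A → W) (α : A)
    (haP : Prime (a α))
    (hs2 : s α * s α = 1)
    (hsa : s α • a α = - a α)
    (hdvd : ∀ p : R, a α ∣ s α • p - p)
    (k : ℕ) :
    -- (1)  p ∈ Q_{k+1}(W_α)  ↔  ∃ h ∈ Q_k(W_α), p − s_α(p) = α²·h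
    (∀ p : R, p ∈ QaSubring a s α (k + 1) ↔
        ∃ h ∈ QaSubring a s α k, p - s α • p = a α ^ 2 * h) ∧
    -- (2)  the well-defined ring homomorphism ι and the fiber-product isomorphism
    (∃ iota : (R ⧸ Ideal.span {a α}) →+*
        ((QaSubring a s α k) ⧸
          (Ideal.span {(⟨a α ^ 2, sq_mem a s α hsa k⟩ : QaSubring a s α k)})),
      (∀ p : R,
        iota (Ideal.Quotient.mk (Ideal.span {a α}) p) =
          Ideal.Quotient.mk
            (Ideal.span {(⟨a α ^ 2, sq_mem a s α hsa k⟩ : QaSubring a s α k)})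
            (⟨(2 : K)⁻¹ • (p + s α • p), half_mem a s α hs2 k p⟩ :
              QaSubring a s α k)) ∧
      (∃ e : (RingHom.eqLocus
                ((Ideal.Quotient.mk
                    (Ideal.span
                      {(⟨a α ^ 2, sq_mem a s α hsa k⟩ : QaSubring a s α k)})).comp
                  (RingHom.fst (QaSubring a s α k) (R ⧸ Ideal.span {a α})))
                (iota.comp
                  (RingHom.snd (QaSubring a s α k) (R ⧸ Ideal.span {a α})))) ≃+*
              (QaSubring a s α (k + 1)),
        ∀ x, ((e x : R)) =
          (((x : (QaSubring a s α k) × (R ⧸ Ideal.span {a α}))).1 : R))) := by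

  have ha0 : a α ≠ 0 := haP.ne_zero
  have hE : (algebraMap K R) 2⁻¹ * 2 = 1 := by
    rw [show ((2:R)) = algebraMap K R 2 from (map_ofNat _ 2).symm, ← map_mul,
      inv_mul_cancel₀ (by norm_num : (2:K) ≠ 0), map_one]
  set E : R := algebraMap K R 2⁻¹ with hEdef
  have hsE : s α • E = E := by
    rw [hEdef, Algebra.algebraMap_eq_smul_one, smul_comm, smul_one]
  have hsmulE : ∀ x : R, (2:K)⁻¹ • x = E * x := fun x => Algebra.smul_def _ x
  have hsq : s α • a α ^ 2 = a α ^ 2 := by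
    rw [smul_pow', hsa, neg_sq]
  -- Part 1
  have part1 : ∀ p : R, p ∈ QaSubring a s α (k + 1) ↔
      ∃ h ∈ QaSubring a s α k, p - s α • p = a α ^ 2 * h := by
    intro p
    constructor
    · intro hp
      obtain ⟨g, hg⟩ := (mem_QaSubring a s α (k+1) p).mp hp
      have hsg : s α • g = -g := aux_cofactor_anti haP hs2 hsa (k+1) hg
      refine ⟨-(a α ^ (2*k) * g), ?_, ?_⟩
      · rw [mem_QaSubring]
        rw [smul_neg, smul_mul', aux_smul_even_pow hsa, hsg]
        exact ⟨2 * g, by ring⟩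
      · rw [← neg_sub (s α • p) p, hg]; ring
    · rintro ⟨h, hh, hph⟩
      rw [mem_QaSubring] at hh
      have h1 : s α • p - p = a α ^ (2*1) * (-h) := by
        rw [← neg_sub p (s α • p), hph]; ring
      have hs_h : s α • h = -h := by
        have := aux_cofactor_anti haP hs2 hsa 1 h1
        rw [smul_neg, neg_neg] at this
        exact neg_eq_iff_eq_neg.mp this
      rw [hs_h] at hh
      have hd2 : a α ^ (2*k) ∣ (2:R) * h := by
        have heq : -h - h = -((2:R) * h) := by ring
        rw [heq] at hh
        exact dvd_neg.mp hh
      have hdh : a α ^ (2*k) ∣ h := by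
        have hh2 : h = E * ((2:R) * h) := by rw [← mul_assoc, hE, one_mul]
        rw [hh2]; exact hd2.mul_left E
      obtain ⟨m, hm⟩ := hdh
      rw [mem_QaSubring]
      refine ⟨-m, ?_⟩
      rw [← neg_sub p (s α • p), hph, hm]
      ring
  refine ⟨part1, ?_⟩
  set asq : QaSubring a s α k := ⟨a α ^ 2, sq_mem a s α hsa k⟩ with hasq
  set I : Ideal (QaSubring a s α k) := Ideal.span {asq} with hI
  set J : Ideal R := Ideal.span {a α} with hJ
  -- pieces of the ring hom φ : R →+* Qk ⧸ I
  have hone : Ideal.Quotient.mk I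
      (⟨(2:K)⁻¹ • ((1:R) + s α • (1:R)), half_mem a s α hs2 k 1⟩ : QaSubring a s α k) = 1 := by
    rw [← map_one (Ideal.Quotient.mk I)]
    refine congrArg _ (Subtype.ext ?_)
    show (2:K)⁻¹ • ((1:R) + s α • (1:R)) = 1
    rw [smul_one, hsmulE, one_add_one_eq_two, hE]
  have hzero : Ideal.Quotient.mk I
      (⟨(2:K)⁻¹ • ((0:R) + s α • (0:R)), half_mem a s α hs2 k 0⟩ : QaSubring a s α k) = 0 := by
    rw [← map_zero (Ideal.Quotient.mk I)]
    refine congrArg _ (Subtype.ext ?_)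
    show (2:K)⁻¹ • ((0:R) + s α • (0:R)) = 0
    rw [smul_zero, add_zero, smul_zero]
  have hmul : ∀ p q : R, Ideal.Quotient.mk I
      (⟨(2:K)⁻¹ • (p * q + s α • (p * q)), half_mem a s α hs2 k (p * q)⟩ : QaSubring a s α k)
      = Ideal.Quotient.mk I ⟨(2:K)⁻¹ • (p + s α • p), half_mem a s α hs2 k p⟩
        * Ideal.Quotient.mk I ⟨(2:K)⁻¹ • (q + s α • q), half_mem a s α hs2 k q⟩ := by
    intro p q
    rw [← map_mul (Ideal.Quotient.mk I), Ideal.Quotient.eq, hI, Ideal.mem_span_singleton]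
    obtain ⟨u, hu⟩ := hdvd p
    obtain ⟨v, hv⟩ := hdvd q
    have hsu : s α • u = u := aux_cofactor_inv haP hs2 hsa hu
    have hsv : s α • v = v := aux_cofactor_inv haP hs2 hsa hv
    have hc : a α ^ (2*k) ∣ s α • (E * (E * (u * v))) - E * (E * (u * v)) := by
      rw [smul_mul', hsE, smul_mul', hsE, smul_mul', hsu, hsv, sub_self]
      exact dvd_zero _
    refine ⟨⟨E * (E * (u * v)), hc⟩, ?_⟩
    apply Subtype.ext
    push_cast
    show (2:K)⁻¹ • (p * q + s α • (p * q))
        - ((2:K)⁻¹ • (p + s α • p)) * ((2:K)⁻¹ • (q + s α • q))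
        = a α ^ 2 * (E * (E * (u * v)))
    rw [hsmulE, hsmulE, hsmulE, smul_mul',
      show s α • p = p + a α * u from by rw [← hu]; ring,
      show s α • q = q + a α * v from by rw [← hv]; ring]
    linear_combination (-(2*p*q + p*(a α)*v + q*(a α)*u + (a α)^2*u*v) * E) * hE
  have hadd : ∀ p q : R, Ideal.Quotient.mk I
      (⟨(2:K)⁻¹ • ((p + q) + s α • (p + q)), half_mem a s α hs2 k (p + q)⟩ : QaSubring a s α k)
      = Ideal.Quotient.mk I ⟨(2:K)⁻¹ • (p + s α • p), half_mem a s α hs2 k p⟩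
        + Ideal.Quotient.mk I ⟨(2:K)⁻¹ • (q + s α • q), half_mem a s α hs2 k q⟩ := by
    intro p q
    rw [← map_add (Ideal.Quotient.mk I)]
    refine congrArg _ (Subtype.ext ?_)
    push_cast
    show (2:K)⁻¹ • ((p + q) + s α • (p + q))
        = (2:K)⁻¹ • (p + s α • p) + (2:K)⁻¹ • (q + s α • q)
    rw [smul_add (s α), hsmulE, hsmulE, hsmulE]
    ring
  let φ : R →+* (QaSubring a s α k) ⧸ I :=
    { toFun := fun p => Ideal.Quotient.mk I
        ⟨(2:K)⁻¹ • (p + s α • p), half_mem a s α hs2 k p⟩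
      map_one' := hone
      map_mul' := hmul
      map_zero' := hzero
      map_add' := hadd }
  have hker : ∀ x ∈ J, φ x = 0 := by
    intro x hx
    rw [hJ, Ideal.mem_span_singleton] at hx
    obtain ⟨q, hq⟩ := hx
    show Ideal.Quotient.mk I ⟨(2:K)⁻¹ • (x + s α • x), half_mem a s α hs2 k x⟩ = 0
    rw [Ideal.Quotient.eq_zero_iff_mem, hI, Ideal.mem_span_singleton]
    obtain ⟨t, ht⟩ := hdvd q
    have hst : s α • t = t := aux_cofactor_inv haP hs2 hsa ht
    have hc : a α ^ (2*k) ∣ s α • (-(E * t)) - (-(E * t)) := by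
      rw [smul_neg, smul_mul', hsE, hst, sub_self]
      exact dvd_zero _
    refine ⟨⟨-(E * t), hc⟩, ?_⟩
    apply Subtype.ext
    push_cast
    show (2:K)⁻¹ • (x + s α • x) = a α ^ 2 * (-(E * t))
    subst hq
    rw [hsmulE, smul_mul', hsa,
      show s α • q = q + a α * t from by rw [← ht]; ring]
    ring
  refine ⟨Ideal.Quotient.lift J φ hker, fun p => Ideal.Quotient.lift_mk J φ hker, ?_⟩
  set iota := Ideal.Quotient.lift J φ hker with hiota
  have hiotamk : ∀ p : R, iota (Ideal.Quotient.mk J p)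
      = Ideal.Quotient.mk I ⟨(2:K)⁻¹ • (p + s α • p), half_mem a s α hs2 k p⟩ :=
    fun p => Ideal.Quotient.lift_mk J φ hker
  have mono : ∀ {p : R}, p ∈ QaSubring a s α (k+1) → p ∈ QaSubring a s α k := by
    intro p hp
    rw [mem_QaSubring] at hp ⊢
    exact dvd_trans (pow_dvd_pow _ (by omega)) hp
  -- key facts about the fiber product condition
  have key : ∀ x : (QaSubring a s α k) × (R ⧸ J),
      Ideal.Quotient.mk I x.1 = iota x.2 →
      ((x.1 : R) ∈ QaSubring a s α (k+1)
        ∧ Ideal.Quotient.mk J (x.1 : R) = x.2) := by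
    intro x hx
    obtain ⟨p, hp⟩ := Ideal.Quotient.mk_surjective x.2
    rw [← hp, hiotamk p, Ideal.Quotient.eq, hI, Ideal.mem_span_singleton] at hx
    obtain ⟨c, hc⟩ := hx
    have hcv : (x.1 : R) = E * (p + s α • p) + a α ^ 2 * (c : R) := by
      have h1 := congrArg (Subtype.val) hc
      push_cast at h1
      rw [hsmulE] at h1
      linear_combination h1
    obtain ⟨d, hd⟩ := (mem_QaSubring a s α k (c : R)).mp c.2
    constructor
    · rw [mem_QaSubring]
      refine ⟨d, ?_⟩
      rw [hcv, smul_add, smul_mul', hsE, smul_add, aux_sq_smul hs2, smul_mul', hsq]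
      linear_combination (a α ^ 2) * hd
    · obtain ⟨u, hu⟩ := hdvd p
      have h2 : Ideal.Quotient.mk J ((x.1 : R)) = Ideal.Quotient.mk J p := by
        rw [Ideal.Quotient.eq]
        refine Ideal.mem_span_singleton.mpr ⟨E * u + a α * (c : R), ?_⟩
        rw [hcv, show s α • p = p + a α * u from by rw [← hu]; ring]
        linear_combination p * hE
      exact h2.trans hp
  have bwd : ∀ (p : R) (hp : p ∈ QaSubring a s α (k+1)),
      Ideal.Quotient.mk I (⟨p, mono hp⟩ : QaSubring a s α k)
        = iota (Ideal.Quotient.mk J p) := by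
    intro p hp
    rw [hiotamk p, Ideal.Quotient.eq, hI, Ideal.mem_span_singleton]
    obtain ⟨g, hg⟩ := (mem_QaSubring a s α (k+1) p).mp hp
    have hsg : s α • g = -g := aux_cofactor_anti haP hs2 hsa (k+1) hg
    have hc : a α ^ (2*k) ∣
        s α • (-(E * (a α ^ (2*k) * g))) - (-(E * (a α ^ (2*k) * g))) := by
      rw [smul_neg, smul_mul', hsE, smul_mul', aux_smul_even_pow hsa k, hsg]
      exact ⟨E * g * 2, by ring⟩
    refine ⟨⟨-(E * (a α ^ (2*k) * g)), hc⟩, ?_⟩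
    apply Subtype.ext
    push_cast
    show p - (2:K)⁻¹ • (p + s α • p) = a α ^ 2 * (-(E * (a α ^ (2*k) * g)))
    rw [hsmulE, show s α • p = p + a α ^ (2*(k+1)) * g from by rw [← hg]; ring]
    linear_combination (-p) * hE
  refine ⟨{
    toFun := fun x => ⟨((x : (QaSubring a s α k) × (R ⧸ J)).1 : R), (key x.1 x.2).1⟩
    invFun := fun q => ⟨⟨⟨(q : R), mono q.2⟩, Ideal.Quotient.mk J (q : R)⟩, bwd (q : R) q.2⟩
    left_inv := by
      intro x
      apply Subtype.ext
      apply Prod.ext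
      · exact Subtype.ext rfl
      · exact (key x.1 x.2).2
    right_inv := fun q => rfl
    map_mul' := fun x y => rfl
    map_add' := fun x y => rfl }, fun x => rfl⟩

end Statement0
end

section
/- Fix α ∈ 𝒜 and an integer m ≥ 0, and let (p_w)_{w∈W} ∈ 𝐐_m(W_α). Then (p_w)_{w∈W} ∈ 𝐐_{m+1}(W_α) if and only if there exist a tuple (r_w)_{w∈W} ∈ 𝐐_m(W_α) and elements q_{[w]} ∈ 𝕜[V], one for each right coset [w] of the two-element subgroup {1, s_α} in W, such that p_w − q_{[w]} = α·r_w for every w ∈ W. -/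
/-!
STATEMENT 1.  Fix α ∈ 𝒜 and an integer m ≥ 0, and let (p_w)_{w∈W} ∈ 𝐐_m(W_α).
Then (p_w)_{w∈W} ∈ 𝐐_{m+1}(W_α) iff there exist a tuple (r_w)_{w∈W} ∈ 𝐐_m(W_α) and
elements q_{[w]} ∈ 𝕜[V], one for each right coset [w] of {1, s_α} in W (encoded as a
function q : W → 𝕜[V] constant on the cosets {w, s_α w}), such that
p_w − q_{[w]} = α·r_w for every w ∈ W.
-/

namespace Statement1

/-- quasi-covariants `𝐐_m(W_α)` of a single reflection, as a subset of `∏_{w ∈ W} 𝕜[V]`. -/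
def QcovaSet {R W A : Type*} [CommRing R] [Group W] [MulSemiringAction W R]
    (a : A → R) (s : A → W) (α : A) (m : ℕ) : Set (W → R) :=
  {p | ∀ w : W, a α ^ m ∣ p (s α * w) - p w}

theorem statement_1
    {K R W A : Type*}
    [Field K] [CharZero K] [CommRing R] [IsDomain R] [Algebra K R]
    [Group W] [MulSemiringAction W R] [SMulCommClass W K R]
    (a : A → R) (s : A → W) (α : A)
    (haP : Prime (a α))
    (hs2 : s α * s α = 1)
    (hsa : s α • a α = - a α)
    (hdvd : ∀ p : R, a α ∣ s α • p - p)
    (m : ℕ) (p : W → R) (hp : p ∈ QcovaSet a s α m) :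
    p ∈ QcovaSet a s α (m + 1) ↔
      ∃ r ∈ QcovaSet a s α m, ∃ q : W → R,
        (∀ w : W, q (s α * w) = q w) ∧ (∀ w : W, p w - q w = a α * r w) := by
  constructor
  · intro hp1
    choose c hc using hp1
    set t : R := algebraMap K R 2⁻¹ with ht
    have h2 : t * 2 = 1 := by
      have h2' : (algebraMap K R) 2 = 2 := map_ofNat _ 2
      rw [ht, ← h2', ← map_mul, inv_mul_cancel₀ (two_ne_zero), map_one]
    refine ⟨fun w => t * (-(a α ^ m * c w)), ?_, fun w => t * (p w + p (s α * w)), ?_, ?_⟩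
    · intro w
      exact ⟨t * (c w - c (s α * w)), by ring⟩
    · intro w
      have : s α * (s α * w) = w := by rw [← mul_assoc, hs2, one_mul]
      show t * (p (s α * w) + p (s α * (s α * w))) = t * (p w + p (s α * w))
      rw [this]; ring
    · intro w
      linear_combination (-t) * hc w - p w * h2
  · rintro ⟨r, hr, q, hq, hpq⟩ w
    obtain ⟨d, hd⟩ := hr w
    exact ⟨d, by linear_combination hpq (s α * w) - hpq w + hq w + a α * hd⟩

end Statement1
end

section
/- Let m ∈ 𝓜(W) and let ⌊m/2⌋ ∈ 𝓜(W) denote the multiplicity α ↦ ⌊m_α/2⌋. The map Φ: 𝕜[V] → ∏_{w∈W} 𝕜[V], f ↦ (w(f))_{w∈W}, is an injective ring homomorphism whose image is exactly the subring of invariants of ∏_{w∈W} 𝕜[V] for the diagonal W-action, and Φ restricts to a ring isomorphism from Q_{⌊m/2⌋}(W) onto 𝐐_m(W)^W := 𝐐_m(W) ∩ (∏_{w∈W} 𝕜[V])^W, the subring of diagonal W-invariant elements of 𝐐_m(W). -/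
/-!
STATEMENT 3.  Let m ∈ 𝓜(W) and let ⌊m/2⌋ denote the multiplicity α ↦ ⌊m_α/2⌋.
The map Φ: 𝕜[V] → ∏_{w∈W} 𝕜[V], f ↦ (w(f))_{w∈W}, is an injective ring homomorphism whose
image is exactly the subring of invariants of ∏_{w∈W} 𝕜[V] for the diagonal W-action
(g·p)_w = g(p_{g⁻¹w}), and Φ restricts to a ring isomorphism from Q_{⌊m/2⌋}(W) onto
𝐐_m(W)^W = 𝐐_m(W) ∩ (∏_{w∈W} 𝕜[V])^W  (expressed as: Φ restricts to a bijection of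
Q_{⌊m/2⌋}(W) onto 𝐐_m(W)^W; being the restriction of the ring homomorphism Φ, this is
precisely a ring isomorphism onto that subring).
-/

namespace Statement3

/-- the ring of quasi-invariants `Q_k(W)` (as a subset of `𝕜[V]`). -/
def QSet {R W A : Type*} [CommRing R] [Group W] [MulSemiringAction W R]
    (a : A → R) (s : A → W) (k : A → ℕ) : Set R :=
  {p | ∀ α, a α ^ (2 * k α) ∣ s α • p - p}

/-- the ring of quasi-covariants `𝐐_m(W)` (as a subset of `∏_{w∈W} 𝕜[V]`). -/
def QcovSet {R W A : Type*} [CommRing R] [Group W] [MulSemiringAction W R]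
    (a : A → R) (s : A → W) (m : A → ℕ) : Set (W → R) :=
  {p | ∀ (α : A) (w : W), a α ^ m α ∣ p (s α * w) - p w}

/-- the set of invariants of `∏_{w∈W} 𝕜[V]` for the diagonal W-action
`(g·p)_w := g(p_{g⁻¹w})` (a subring). -/
def DiagFixedSet (W R : Type*) [CommRing R] [Group W] [MulSemiringAction W R] :
    Set (W → R) :=
  {p | ∀ g w : W, g • p (g⁻¹ * w) = p w}

/-- the ring homomorphism Φ : 𝕜[V] → ∏_{w∈W} 𝕜[V], f ↦ (w(f))_w. -/
def Phi (W R : Type*) [CommRing R] [Group W] [MulSemiringAction W R] : R →+* (W → R) :=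
  Pi.ringHom fun w => MulSemiringAction.toRingHom W R w

lemma key {K R W A : Type*} [Field K] [CharZero K] [CommRing R] [IsDomain R] [Algebra K R]
    [Group W] [MulSemiringAction W R] (a : A → R) (s : A → W)
    (haP : ∀ α, Prime (a α)) (hs2 : ∀ α, s α * s α = 1)
    (hsa : ∀ α, s α • a α = - a α)
    (hdvd : ∀ (α : A) (p : R), a α ∣ s α • p - p)
    (m : A → ℕ) (f : R) (hf : f ∈ QSet a s fun α => m α / 2) (α : A) :
    a α ^ m α ∣ s α • f - f := by
  have hf' : a α ^ (2 * (m α / 2)) ∣ s α • f - f := hf α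
  rcases Nat.even_or_odd (m α) with ⟨k, hk⟩ | ⟨k, hk⟩
  · have h2 : 2 * (m α / 2) = m α := by omega
    rwa [h2] at hf'
  · have hk2 : m α / 2 = k := by omega
    rw [hk2] at hf'
    obtain ⟨q, hq⟩ := hf'
    have hsd : s α • (s α • f - f) = -(s α • f - f) := by
      rw [smul_sub, smul_smul, hs2, one_smul]; ring
    have h1 : a α ^ (2 * k) * (s α • q) = a α ^ (2 * k) * (-q) := by
      have := hsd
      rw [hq, smul_mul', smul_pow', hsa, Even.neg_pow (even_two_mul k)] at this
      rw [this]; ring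
    have hq' : s α • q = -q :=
      mul_left_cancel₀ (pow_ne_zero _ (haP α).ne_zero) h1
    have h2q : a α ∣ -(2 * q) := by
      have := hdvd α q
      rw [hq'] at this
      have e : -q - q = -(2 * q) := by ring
      rwa [e] at this
    have h2q' : a α ∣ 2 * q := (dvd_neg).mp h2q
    have hu : IsUnit (2 : R) := by
      have := (algebraMap K R).isUnit_map (isUnit_iff_ne_zero.mpr (two_ne_zero (α := K)))
      rwa [map_ofNat] at this
    obtain ⟨u, huu⟩ := hu
    have h3 : a α ∣ q := by
      have := h2q'.mul_left (↑u⁻¹ : R)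
      rwa [← huu, ← mul_assoc, u.inv_mul, one_mul] at this
    obtain ⟨q', hq''⟩ := h3
    exact ⟨q', by rw [hq, hq'', hk, pow_succ]; ring⟩


theorem statement_3
    {K R W A : Type*}
    [Field K] [CharZero K] [CommRing R] [IsDomain R] [Algebra K R]
    [Group W] [Fintype W] [MulSemiringAction W R] [SMulCommClass W K R]
    [Fintype A]
    (a : A → R) (s : A → W)
    (haP : ∀ α, Prime (a α))
    (hne : ∀ α β, α ≠ β → ¬ a α ∣ a β)
    (hs2 : ∀ α, s α * s α = 1)
    (hsa : ∀ α, s α • a α = - a α)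
    (hdvd : ∀ (α : A) (p : R), a α ∣ s α • p - p)
    (wA : W → A → A)
    (hwA_one : ∀ α, wA 1 α = α)
    (hwA_mul : ∀ g h α, wA (g * h) α = wA g (wA h α))
    (hws : ∀ w α, s (wA w α) = w * s α * w⁻¹)
    (hwa : ∀ w α, ∃ c : K, c ≠ 0 ∧ w • a α = c • a (wA w α))
    (m : A → ℕ) (hm : ∀ w α, m (wA w α) = m α) :
    Function.Injective ⇑(Phi W R) ∧
    Set.range ⇑(Phi W R) = DiagFixedSet W R ∧
    Set.BijOn ⇑(Phi W R) (QSet a s fun α => m α / 2)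
      (QcovSet a s m ∩ DiagFixedSet W R) := by
  have hPhi : ∀ (f : R) (w : W), Phi W R f w = w • f := fun f w => rfl
  have hrec : ∀ p ∈ DiagFixedSet W R, ∀ w : W, p w = w • p 1 := by
    intro p hp w
    have := hp w w
    rw [inv_mul_cancel] at this
    exact this.symm
  have hinj : Function.Injective ⇑(Phi W R) := by
    intro f g h
    have := congrFun h 1
    simpa [hPhi] using this
  refine ⟨hinj, ?_, ?_⟩
  · ext p
    constructor
    · rintro ⟨f, rfl⟩ g w
      rw [hPhi, hPhi, smul_smul, mul_inv_cancel_left]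
    · intro hp
      exact ⟨p 1, funext fun w => (hrec p hp w).symm⟩
  · refine ⟨?_, hinj.injOn, ?_⟩
    · intro f hf
      refine ⟨?_, fun g w => by rw [hPhi, hPhi, smul_smul, mul_inv_cancel_left]⟩
      intro α w
      set β := wA w⁻¹ α with hβ
      have hsb : s β = w⁻¹ * s α * w := by rw [hβ, hws]; simp
      have hcomm : s α * w = w * s β := by rw [hsb]; group
      have hd : a β ^ m β ∣ s β • f - f := key (K := K) a s haP hs2 hsa hdvd m f hf β
      obtain ⟨c, hc0, hc⟩ := hwa w β
      have hwb : wA w β = α := by rw [hβ, ← hwA_mul, mul_inv_cancel, hwA_one]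
      rw [hwb] at hc
      have hmb : m β = m α := hm w⁻¹ α
      obtain ⟨q, hq⟩ := hd
      have hc' : w • a β = algebraMap K R c * a α := by rw [hc, Algebra.smul_def]
      have heq : Phi W R f (s α * w) - Phi W R f w
          = a α ^ m α * (algebraMap K R c ^ m β * (w • q)) := by
        rw [hPhi, hPhi, hcomm, mul_smul, ← smul_sub, hq, smul_mul', smul_pow', hc',
          mul_pow, hmb]
        ring
      exact ⟨_, heq⟩
    · intro p hp
      obtain ⟨hq, hfix⟩ := hp
      refine ⟨p 1, ?_, funext fun w => (hrec p hfix w).symm⟩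
      intro α
      have h1 : a α ^ m α ∣ p (s α * 1) - p 1 := hq α 1
      rw [mul_one, hrec p hfix (s α)] at h1
      exact (pow_dvd_pow (a α) (by omega : 2 * (m α / 2) ≤ m α)).trans h1


end Statement3
end

section
/- Let k ∈ 𝓜(W). For every f ∈ 𝕜[V] and every g ∈ Q_k(W), the tuple (f·w(g))_{w∈W} lies in 𝐐_{2k+1}(W); equivalently, α^{2k_α+1} divides f·w(g) − f·(s_α w)(g) in 𝕜[V] for every α ∈ 𝒜 and every w ∈ W. Consequently, the ring homomorphism φ: 𝕜[V] ⊗_{𝕜[V]^W} 𝕜[V] → ∏_{w∈W} 𝕜[V], f ⊗ g ↦ (f·w(g))_{w∈W}, maps 𝕜[V] ⊗_{𝕜[V]^W} Q_k(W) into 𝐐_{2k+1}(W). -/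
/-!
STATEMENT 4.  Let k ∈ 𝓜(W).  For every f ∈ 𝕜[V] and every g ∈ Q_k(W), the tuple
(f·w(g))_{w∈W} lies in 𝐐_{2k+1}(W); equivalently, α^{2k_α+1} divides
f·w(g) − f·(s_α w)(g) in 𝕜[V] for every α ∈ 𝒜 and every w ∈ W.  Consequently, the ring
homomorphism φ: 𝕜[V] ⊗_{𝕜[V]^W} 𝕜[V] → ∏_{w∈W} 𝕜[V], f ⊗ g ↦ (f·w(g))_{w∈W}, maps
𝕜[V] ⊗_{𝕜[V]^W} Q_k(W) into 𝐐_{2k+1}(W).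
-/

open scoped TensorProduct

namespace Statement4

set_option synthInstance.maxHeartbeats 1000000
set_option maxHeartbeats 1000000

variable {K R W A : Type*}

/-- the quasi-invariants `Q_k(W)` as a subset of `𝕜[V]`. -/
def QSet [CommRing R] [Group W] [MulSemiringAction W R]
    (a : A → R) (s : A → W) (k : A → ℕ) : Set R :=
  {p | ∀ α, a α ^ (2 * k α) ∣ s α • p - p}

/-- the quasi-covariants `𝐐_m(W)` as a subset of `∏_{w∈W} 𝕜[V]`. -/
def QcovSet [CommRing R] [Group W] [MulSemiringAction W R]
    (a : A → R) (s : A → W) (m : A → ℕ) : Set (W → R) :=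
  {p | ∀ (α : A) (w : W), a α ^ m α ∣ p (s α * w) - p w}

/-- the subring of invariants 𝕜[V]^W, as a 𝕜-subalgebra of 𝕜[V]. -/
def InvAlg (K W R : Type*) [Field K] [CommRing R] [Algebra K R] [Group W]
    [MulSemiringAction W R] [SMulCommClass W K R] : Subalgebra K R where
  carrier := {x : R | ∀ g : W, g • x = x}
  zero_mem' := by intro g; simp
  one_mem' := by intro g; simp
  add_mem' := by intro x y hx hy g; rw [smul_add, hx g, hy g]
  mul_mem' := by intro x y hx hy g; rw [smul_mul', hx g, hy g]
  algebraMap_mem' := by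
    intro c g
    rw [Algebra.algebraMap_eq_smul_one, smul_comm, smul_one]

/-- `Q_k(W)` as a 𝕜[V]^W-subalgebra of 𝕜[V]. -/
def QalgInv (K : Type*) [Field K] [CommRing R] [Algebra K R] [Group W]
    [MulSemiringAction W R] [SMulCommClass W K R]
    (a : A → R) (s : A → W) (k : A → ℕ) : Subalgebra ↥(InvAlg K W R) R where
  carrier := {p : R | ∀ α, a α ^ (2 * k α) ∣ s α • p - p}
  one_mem' := by intro α; simp
  add_mem' := by
    intro p q hp hq α
    have h : s α • (p + q) - (p + q) = (s α • p - p) + (s α • q - q) := by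
      rw [smul_add]; ring
    rw [h]; exact dvd_add (hp α) (hq α)
  mul_mem' := by
    intro p q hp hq α
    have h : s α • (p * q) - p * q
        = (s α • p) * (s α • q - q) + (s α • p - p) * q := by
      rw [smul_mul']; ring
    rw [h]
    exact dvd_add (Dvd.dvd.mul_left (hq α) _) (Dvd.dvd.mul_right (hp α) _)
  algebraMap_mem' := by
    intro c α
    have h0 : (algebraMap ↥(InvAlg K W R) R) c = (c : R) := rfl
    rw [h0, c.2 (s α), sub_self]
    exact dvd_zero _

/-- the ring homomorphism Φ : 𝕜[V] → ∏_{w ∈ W} 𝕜[V], f ↦ (w(f))_w. -/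
def Phi (W R : Type*) [CommRing R] [Group W] [MulSemiringAction W R] : R →+* (W → R) :=
  Pi.ringHom fun w => MulSemiringAction.toRingHom W R w

/-- the diagonal embedding 𝕜[V] → ∏_{w ∈ W} 𝕜[V] as a 𝕜[V]^W-algebra map. -/
def diagA (K W R : Type*) [Field K] [CommRing R] [Algebra K R] [Group W]
    [MulSemiringAction W R] [SMulCommClass W K R] : R →ₐ[↥(InvAlg K W R)] (W → R) :=
  AlgHom.mk' (Pi.constRingHom W R) fun _ _ => rfl

/-- Φ as a 𝕜[V]^W-algebra map. -/
def PhiA (K W R : Type*) [Field K] [CommRing R] [Algebra K R] [Group W]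
    [MulSemiringAction W R] [SMulCommClass W K R] : R →ₐ[↥(InvAlg K W R)] (W → R) :=
  AlgHom.mk' (Phi W R) fun c x => by
    funext w
    show w • (c • x) = c • (w • x)
    rw [Algebra.smul_def, Algebra.smul_def, smul_mul']
    congr 1
    exact c.2 w

/-- the ring homomorphism φ : 𝕜[V] ⊗_{𝕜[V]^W} 𝕜[V] → ∏_{w∈W} 𝕜[V], f ⊗ g ↦ (f·w(g))_w. -/
noncomputable def phiFull (K W R : Type*) [Field K] [CommRing R] [Algebra K R] [Group W]
    [MulSemiringAction W R] [SMulCommClass W K R] :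
    (R ⊗[↥(InvAlg K W R)] R) →ₐ[↥(InvAlg K W R)] (W → R) :=
  Algebra.TensorProduct.productMap (diagA K W R) (PhiA K W R)

/-- the restriction of φ to 𝕜[V] ⊗_{𝕜[V]^W} Q_k(W). -/
noncomputable def phiRes (K : Type*) [Field K] [CommRing R] [Algebra K R] [Group W]
    [MulSemiringAction W R] [SMulCommClass W K R]
    (a : A → R) (s : A → W) (k : A → ℕ) :
    (R ⊗[↥(InvAlg K W R)] ↥(QalgInv K a s k)) →ₐ[↥(InvAlg K W R)] (W → R) :=
  Algebra.TensorProduct.productMap (diagA K W R)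
    ((PhiA K W R).comp (QalgInv K a s k).val)


/-- Key divisibility lemma: for a quasi-invariant `g`,
`a α ^ (2 k α + 1)` divides `(s α * w) • g - w • g`. -/
theorem key_dvd
    [Field K] [CharZero K] [CommRing R] [IsDomain R] [Algebra K R]
    [Group W] [MulSemiringAction W R] [SMulCommClass W K R]
    (a : A → R) (s : A → W)
    (haP : ∀ α, Prime (a α))
    (hs2 : ∀ α, s α * s α = 1)
    (hsa : ∀ α, s α • a α = - a α)
    (hdvd : ∀ (α : A) (p : R), a α ∣ s α • p - p)
    (wA : W → A → A)
    (hwA_one : ∀ α, wA 1 α = α)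
    (hwA_mul : ∀ g h α, wA (g * h) α = wA g (wA h α))
    (hws : ∀ w α, s (wA w α) = w * s α * w⁻¹)
    (hwa : ∀ w α, ∃ c : K, c ≠ 0 ∧ w • a α = c • a (wA w α))
    (k : A → ℕ) (hk : ∀ w α, k (wA w α) = k α)
    (g : R) (hg : g ∈ QSet a s k) (α : A) (w : W) :
    a α ^ (2 * k α + 1) ∣ (s α * w) • g - w • g := by
  set α' := wA w⁻¹ α with hα'
  have hαα : wA w α' = α := by
    rw [hα', ← hwA_mul, mul_inv_cancel, hwA_one]
  have hk' : k α' = k α := by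
    conv_rhs => rw [← hαα, hk]
  -- step 1: a α' ^ (2 k α' + 1) ∣ s α' • g - g
  obtain ⟨t, ht⟩ := hg α'
  have hDanti : s α' • (s α' • g - g) = -(s α' • g - g) := by
    rw [smul_sub, smul_smul, hs2, one_smul]; ring
  have hst : s α' • t = -t := by
    have h1 : s α' • (s α' • g - g) = a α' ^ (2 * k α') * (s α' • t) := by
      rw [ht, smul_mul', smul_pow', hsa, Even.neg_pow ⟨k α', by ring⟩]
    have h2 : a α' ^ (2 * k α') * (t + s α' • t) = 0 := by
      have h := hDanti
      rw [h1, ht] at h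
      linear_combination h
    have h3 : (a α' : R) ^ (2 * k α') ≠ 0 := pow_ne_zero _ (haP α').ne_zero
    have h4 := (mul_eq_zero.mp h2).resolve_left h3
    linear_combination h4
  have h2unit : IsUnit (2 : R) := by
    have h := (isUnit_iff_ne_zero.mpr (two_ne_zero : (2 : K) ≠ 0)).map (algebraMap K R)
    rwa [map_ofNat] at h
  have hat : a α' ∣ t := by
    have h := hdvd α' t
    rw [hst] at h
    have h2 : a α' ∣ 2 * t := by
      have he : -t - t = -(2 * t) := by ring
      rw [he, dvd_neg] at h
      exact h
    rcases (haP α').2.2 _ _ h2 with h3 | h3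
    · exact absurd (isUnit_of_dvd_unit h3 h2unit) (haP α').not_unit
    · exact h3
  obtain ⟨t', ht'⟩ := hat
  have hD' : s α' • g - g = a α' ^ (2 * k α' + 1) * t' := by
    rw [ht, ht', pow_succ]; ring
  -- step 2: transport by w
  have hsw : s α * w = w * s α' := by
    have h := hws w α'
    rw [hαα] at h
    rw [h]
    group
  obtain ⟨c, hc0, hc⟩ := hwa w α'
  rw [hαα] at hc
  have hwD : (s α * w) • g - w • g = w • (s α' • g - g) := by
    rw [smul_sub, hsw, mul_smul]
  rw [hwD, hD', smul_mul', smul_pow', hc, ← hk']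
  refine Dvd.dvd.mul_right ?_ _
  rw [Algebra.smul_def, mul_pow]
  exact Dvd.dvd.mul_left dvd_rfl _

theorem statement_4
    [Field K] [CharZero K] [CommRing R] [IsDomain R] [Algebra K R]
    [Group W] [Fintype W] [MulSemiringAction W R] [SMulCommClass W K R]
    [Fintype A]
    (a : A → R) (s : A → W)
    (haP : ∀ α, Prime (a α))
    (hne : ∀ α β, α ≠ β → ¬ a α ∣ a β)
    (hs2 : ∀ α, s α * s α = 1)
    (hsa : ∀ α, s α • a α = - a α)
    (hdvd : ∀ (α : A) (p : R), a α ∣ s α • p - p)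
    (wA : W → A → A)
    (hwA_one : ∀ α, wA 1 α = α)
    (hwA_mul : ∀ g h α, wA (g * h) α = wA g (wA h α))
    (hws : ∀ w α, s (wA w α) = w * s α * w⁻¹)
    (hwa : ∀ w α, ∃ c : K, c ≠ 0 ∧ w • a α = c • a (wA w α))
    (k : A → ℕ) (hk : ∀ w α, k (wA w α) = k α) :
    -- the explicit divisibility statement
    (∀ f g : R, g ∈ QSet a s k →
        ∀ (α : A) (w : W), a α ^ (2 * k α + 1) ∣ f * (w • g) - f * ((s α * w) • g)) ∧
    -- equivalently, the tuple (f · w(g))_w lies in 𝐐_{2k+1}(W)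
    (∀ f g : R, g ∈ QSet a s k →
        (fun w : W => f * (w • g)) ∈ QcovSet a s fun α => 2 * k α + 1) ∧
    -- φ is given on pure tensors by f ⊗ g ↦ (f · w(g))_w
    (∀ f g : R,
        phiFull K W R (f ⊗ₜ[↥(InvAlg K W R)] g) = fun w : W => f * (w • g)) ∧
    -- consequently φ maps 𝕜[V] ⊗_{𝕜[V]^W} Q_k(W) into 𝐐_{2k+1}(W)
    (∀ y : R ⊗[↥(InvAlg K W R)] ↥(QalgInv K a s k),
        phiRes K a s k y ∈ QcovSet a s fun α => 2 * k α + 1) := by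
  have main : ∀ f g : R, g ∈ QSet a s k →
      ∀ (α : A) (w : W), a α ^ (2 * k α + 1) ∣ f * (w • g) - f * ((s α * w) • g) := by
    intro f g hg α w
    have h := key_dvd a s haP hs2 hsa hdvd wA hwA_one hwA_mul hws hwa k hk g hg α w
    have : f * (w • g) - f * ((s α * w) • g) = -(f * ((s α * w) • g - w • g)) := by ring
    rw [this]
    exact dvd_neg.mpr (h.mul_left f)
  have mem : ∀ f g : R, g ∈ QSet a s k →
      (fun w : W => f * (w • g)) ∈ QcovSet a s fun α => 2 * k α + 1 := by
    intro f g hg α w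
    have h := key_dvd a s haP hs2 hsa hdvd wA hwA_one hwA_mul hws hwa k hk g hg α w
    have : f * ((s α * w) • g) - f * (w • g) = f * ((s α * w) • g - w • g) := by ring
    exact this ▸ h.mul_left f
  have tmul_eq : ∀ f g : R,
      phiFull K W R (f ⊗ₜ[↥(InvAlg K W R)] g) = fun w : W => f * (w • g) := by
    intro f g
    rfl
  refine ⟨main, mem, tmul_eq, ?_⟩
  intro y
  have hadd : ∀ p q : W → R, p ∈ QcovSet a s (fun α => 2 * k α + 1) →
      q ∈ QcovSet a s (fun α => 2 * k α + 1) →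
      p + q ∈ QcovSet a s (fun α => 2 * k α + 1) := by
    intro p q hp hq α w
    have : (p + q) (s α * w) - (p + q) w = (p (s α * w) - p w) + (q (s α * w) - q w) := by
      simp [Pi.add_apply]; ring
    rw [this]
    exact dvd_add (hp α w) (hq α w)
  induction y using TensorProduct.induction_on with
  | zero =>
    rw [map_zero]
    intro α w
    simp
  | tmul f g =>
    have heq : phiRes K a s k (f ⊗ₜ[↥(InvAlg K W R)] g) = fun w : W => f * (w • (g : R)) := rfl
    rw [heq]
    exact mem f (g : R) g.2
  | add x y hx hy =>
    rw [map_add]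
    exact hadd _ _ hx hy

end Statement4
end

section
/- Let k ∈ 𝓜(W), α ∈ 𝒜, and (p_w)_{w∈W} ∈ 𝐐_{2k+1}(W). Then for every w ∈ W the polynomial p_w − p_{s_{w(α)}w} is divisible by w(α)^{2k_α+1} in 𝕜[V] (here s_{w(α)} = w·s_α·w⁻¹, so p_{s_{w(α)}w} = p_{w·s_α}), and the tuple (q_w)_{w∈W} defined by q_w := ½·(p_w − p_{s_{w(α)}w})/w(α)^{2k_α+1} belongs to 𝐐_1(W); that is, β divides q_w − q_{s_β w} for every β ∈ 𝒜 and every w ∈ W. -/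
/-!
STATEMENT 5.  Let k ∈ 𝓜(W), α ∈ 𝒜, and (p_w)_{w∈W} ∈ 𝐐_{2k+1}(W).  Then for every w ∈ W
the polynomial p_w − p_{s_{w(α)}w} is divisible by w(α)^{2k_α+1} in 𝕜[V]
(here s_{w(α)} = w·s_α·w⁻¹, so p_{s_{w(α)}w} = p_{w·s_α}), and the tuple (q_w)_{w∈W}
defined by q_w := ½·(p_w − p_{s_{w(α)}w})/w(α)^{2k_α+1} (i.e. the unique q with
p_w − p_{w·s_α} = 2·w(α)^{2k_α+1}·q_w) belongs to 𝐐_1(W); that is, β divides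
q_w − q_{s_β w} for every β ∈ 𝒜 and every w ∈ W.
-/

namespace Statement5

/-- the quasi-covariants `𝐐_m(W)` as a subset of `∏_{w∈W} 𝕜[V]`. -/
def QcovSet {R W A : Type*} [CommRing R] [Group W] [MulSemiringAction W R]
    (a : A → R) (s : A → W) (m : A → ℕ) : Set (W → R) :=
  {p | ∀ (α : A) (w : W), a α ^ m α ∣ p (s α * w) - p w}

theorem statement_5
    {K R W A : Type*}
    [Field K] [CharZero K] [CommRing R] [IsDomain R] [Algebra K R]
    [Group W] [Fintype W] [MulSemiringAction W R] [SMulCommClass W K R]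
    [Fintype A]
    (a : A → R) (s : A → W)
    (haP : ∀ α, Prime (a α))
    (hne : ∀ α β, α ≠ β → ¬ a α ∣ a β)
    (hs2 : ∀ α, s α * s α = 1)
    (hsa : ∀ α, s α • a α = - a α)
    (hdvd : ∀ (α : A) (p : R), a α ∣ s α • p - p)
    (wA : W → A → A)
    (hwA_one : ∀ α, wA 1 α = α)
    (hwA_mul : ∀ g h α, wA (g * h) α = wA g (wA h α))
    (hws : ∀ w α, s (wA w α) = w * s α * w⁻¹)
    (hwa : ∀ w α, ∃ c : K, c ≠ 0 ∧ w • a α = c • a (wA w α))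
    (k : A → ℕ) (hk : ∀ w α, k (wA w α) = k α)
    (α : A) (p : W → R)
    (hp : p ∈ QcovSet a s fun β => 2 * k β + 1) :
    (∀ w : W, (w • a α) ^ (2 * k α + 1) ∣ p w - p (w * s α)) ∧
    ∃ q : W → R,
      (∀ w : W, p w - p (w * s α) = 2 * ((w • a α) ^ (2 * k α + 1) * q w)) ∧
      ∀ (β : A) (w : W), a β ∣ q (s β * w) - q w := by
  classical
  have key : ∀ w : W, (w • a α) ^ (2 * k α + 1) ∣ p w - p (w * s α) := by
    intro w
    obtain ⟨c, hc, hca⟩ := hwa w α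
    have h1 := hp (wA w α) w
    simp only [hws w α, hk w α, show w * s α * w⁻¹ * w = w * s α by group] at h1
    have hu : IsUnit ((algebraMap K R) c) := (isUnit_iff_ne_zero.mpr hc).map (algebraMap K R)
    rw [hca, Algebra.smul_def, mul_pow]
    exact (hu.pow _).mul_left_dvd.mpr (dvd_sub_comm.mp h1)
  choose r hr using key
  have hγ0 : ∀ w : W, (w • a α) ≠ 0 := by
    intro w h
    have h2 : a α = 0 := by
      have := congrArg (w⁻¹ • ·) h
      simpa using this
    exact (haP α).ne_zero h2
  have hodd : Odd (2 * k α + 1) := ⟨k α, by ring⟩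
  have hrd : ∀ (β : A) (w : W), a β ∣ r (s β * w) - r w := by
    intro β w
    by_cases hβ : β = wA w α
    · subst hβ
      have hsw : s (wA w α) * w = w * s α := by
        rw [hws]; group
      rw [hsw]
      have h1 := hr (s (wA w α) * w)
      have hγ' : (s (wA w α) * w) • a α = -(w • a α) := by
        rw [hsw, mul_smul, hsa, smul_neg]
      rw [hγ', hodd.neg_pow, hsw, show w * s α * s α = w by
        rw [mul_assoc, hs2, mul_one]] at h1
      have h2 := hr w
      have hz : (w • a α) ^ (2 * k α + 1) * (r (w * s α) - r w) = 0 := by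
        linear_combination h1 + h2
      have hz2 : r (w * s α) - r w = 0 := by
        rcases mul_eq_zero.mp hz with h | h
        · exact absurd h (pow_ne_zero _ (hγ0 w))
        · exact h
      rw [hz2]
      exact dvd_zero _
    · have hd1 : a β ∣ p (s β * w) - p w :=
        dvd_trans (dvd_pow_self (a β) (Nat.succ_ne_zero _)) (hp β w)
      have hd2 : a β ∣ p (s β * w * s α) - p (w * s α) := by
        have := dvd_trans (dvd_pow_self (a β) (Nat.succ_ne_zero _)) (hp β (w * s α))
        rwa [← mul_assoc] at this
      have hd3 : a β ∣ ((s β * w) • a α) - w • a α := by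
        have := hdvd β (w • a α)
        rwa [← mul_smul] at this
      have hd4 : a β ∣ ((s β * w) • a α) ^ (2 * k α + 1) - (w • a α) ^ (2 * k α + 1) :=
        dvd_trans hd3 (sub_dvd_pow_sub_pow _ _ _)
      have he : (w • a α) ^ (2 * k α + 1) * (r (s β * w) - r w)
          = ((p (s β * w) - p w) - (p (s β * w * s α) - p (w * s α)))
            - (((s β * w) • a α) ^ (2 * k α + 1) - (w • a α) ^ (2 * k α + 1)) * r (s β * w) := by
        linear_combination hr w - hr (s β * w)
      have hdvdall : a β ∣ (w • a α) ^ (2 * k α + 1) * (r (s β * w) - r w) := by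
        rw [he]
        exact dvd_sub (dvd_sub hd1 hd2) (hd4.mul_right _)
      have hnd : ¬ a β ∣ (w • a α) ^ (2 * k α + 1) := by
        intro hcon
        have hγ := (haP β).dvd_of_dvd_pow hcon
        obtain ⟨c, hc, hca⟩ := hwa w α
        rw [hca, Algebra.smul_def] at hγ
        have hu : IsUnit ((algebraMap K R) c) := (isUnit_iff_ne_zero.mpr hc).map (algebraMap K R)
        rcases (haP β).2.2 _ _ hγ with h | h
        · exact (haP β).not_unit (isUnit_of_dvd_unit h hu)
        · exact hne β (wA w α) hβ h
      exact ((haP β).2.2 _ _ hdvdall).resolve_left hnd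
  have h2x : ∀ x : R, (2 : R) * ((2 : K)⁻¹ • x) = x := by
    intro x
    rw [show (2 : R) = algebraMap K R 2 from (map_ofNat (algebraMap K R) 2).symm, ← Algebra.smul_def, smul_smul,
      mul_inv_cancel₀ (two_ne_zero), one_smul]
  refine ⟨fun w => ⟨r w, hr w⟩, fun w => (2 : K)⁻¹ • r w, ?_, ?_⟩
  · intro w
    rw [mul_smul_comm, h2x]
    exact hr w
  · intro β w
    rw [← smul_sub, Algebra.smul_def]
    exact (hrd β w).mul_left _

end Statement5
end

section
/- Let k ∈ 𝓜(W) and let (f_w)_{w∈W} ∈ 𝐐_{2k+1}(W). Then for every α ∈ 𝒜: (i) α divides f_w − s_α(f_{s_α w}) in 𝕜[V] for every w ∈ W; and (ii) the tuple (g_w)_{w∈W} defined by g_w := (f_w − s_α(f_{s_α w}))/α again belongs to 𝐐_{2k+1}(W). In other words, 𝐐_{2k+1}(W) is stable under the componentwise Demazure (divided-difference) operators ∇_α. -/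
/-!
STATEMENT 9.  Let k ∈ 𝓜(W) and let (f_w)_{w∈W} ∈ 𝐐_{2k+1}(W).  Then for every α ∈ 𝒜:
(i)  α divides f_w − s_α(f_{s_α w}) in 𝕜[V] for every w ∈ W; and
(ii) the tuple (g_w)_{w∈W} defined by g_w := (f_w − s_α(f_{s_α w}))/α again belongs to
𝐐_{2k+1}(W).  In other words, 𝐐_{2k+1}(W) is stable under the componentwise Demazure
(divided-difference) operators ∇_α.
-/

namespace Statement9

/-- the quasi-covariants `𝐐_m(W)` as a subset of `∏_{w∈W} 𝕜[V]`. -/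
def QcovSet {R W A : Type*} [CommRing R] [Group W] [MulSemiringAction W R]
    (a : A → R) (s : A → W) (m : A → ℕ) : Set (W → R) :=
  {p | ∀ (α : A) (w : W), a α ^ m α ∣ p (s α * w) - p w}

theorem statement_9
    {K R W A : Type*}
    [Field K] [CharZero K] [CommRing R] [IsDomain R] [Algebra K R]
    [Group W] [Fintype W] [MulSemiringAction W R] [SMulCommClass W K R]
    [Fintype A]
    (a : A → R) (s : A → W)
    (haP : ∀ α, Prime (a α))
    (hne : ∀ α β, α ≠ β → ¬ a α ∣ a β)
    (hs2 : ∀ α, s α * s α = 1)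
    (hsa : ∀ α, s α • a α = - a α)
    (hdvd : ∀ (α : A) (p : R), a α ∣ s α • p - p)
    (wA : W → A → A)
    (hwA_one : ∀ α, wA 1 α = α)
    (hwA_mul : ∀ g h α, wA (g * h) α = wA g (wA h α))
    (hws : ∀ w α, s (wA w α) = w * s α * w⁻¹)
    (hwa : ∀ w α, ∃ c : K, c ≠ 0 ∧ w • a α = c • a (wA w α))
    (k : A → ℕ) (hk : ∀ w α, k (wA w α) = k α)
    (f : W → R) (hf : f ∈ QcovSet a s fun β => 2 * k β + 1) (α : A) :
    (∀ w : W, a α ∣ f w - s α • f (s α * w)) ∧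
    ∃ g : W → R,
      (∀ w : W, f w - s α • f (s α * w) = a α * g w) ∧
      g ∈ QcovSet a s fun β => 2 * k β + 1 := by
  classical
  have hα0 : a α ≠ 0 := (haP α).ne_zero
  have h1 : ∀ w : W, a α ∣ f w - s α • f (s α * w) := by
    intro w
    have h2 : a α ∣ f (s α * w) - f w :=
      dvd_trans (dvd_pow_self (a α) (Nat.succ_ne_zero _)) (hf α w)
    have h3 : a α ∣ s α • f (s α * w) - f (s α * w) := hdvd α _
    have heq : f w - s α • f (s α * w)
        = -((f (s α * w) - f w) + (s α • f (s α * w) - f (s α * w))) := by ring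
    rw [heq]
    exact (h2.add h3).neg_right
  set g : W → R := fun w => (h1 w).choose with hg
  have hgspec : ∀ w, f w - s α • f (s α * w) = a α * g w := fun w => (h1 w).choose_spec
  refine ⟨h1, g, hgspec, ?_⟩
  intro β w
  have key : a α * (g (s β * w) - g w)
      = (f (s β * w) - s α • f (s α * (s β * w))) - (f w - s α • f (s α * w)) := by
    rw [mul_sub, ← hgspec, ← hgspec]
  by_cases hβ : β = α
  · subst hβ
    obtain ⟨q, hq⟩ := hf β w
    obtain ⟨r, hr⟩ := hdvd β q
    have hw' : s β * (s β * w) = w := by rw [← mul_assoc, hs2, one_mul]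
    have hsd2 : s β • f (s β * w) - s β • f w
        = -(a β ^ (2 * k β + 1)) * s β • q := by
      rw [← smul_sub, hq, smul_mul', smul_pow', hsa, Odd.neg_pow ⟨k β, by ring⟩]
    refine ⟨-r, mul_left_cancel₀ hα0 ?_⟩
    rw [key, hw']
    linear_combination hq + hsd2 - (a β ^ (2 * k β + 1)) * hr
  · set γ := wA (s α) β with hγ
    have hγβ : wA (s α) γ = β := by rw [hγ, ← hwA_mul, hs2, hwA_one]
    have hkγ : k γ = k β := hk (s α) β
    obtain ⟨q1, hq1⟩ := hf β w
    have hsw : s γ * (s α * w) = s α * (s β * w) := by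
      rw [hγ, hws]; group
    obtain ⟨q2, hq2⟩ := hf γ (s α * w)
    rw [hsw] at hq2
    obtain ⟨c, hc0, hc⟩ := hwa (s α) γ
    rw [hγβ] at hc
    have hsm2 : s α • f (s α * (s β * w)) - s α • f (s α * w)
        = (algebraMap K R c) ^ (2 * k γ + 1) *
          (a β ^ (2 * k γ + 1) * (s α • q2)) := by
      rw [← smul_sub, hq2, smul_mul', smul_pow', hc, Algebra.smul_def, mul_pow]
      ring
    rw [hkγ] at hsm2
    have keq : a α * (g (s β * w) - g w)
        = a β ^ (2 * k β + 1) *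
          (q1 - (algebraMap K R c) ^ (2 * k β + 1) * (s α • q2)) := by
      linear_combination key + hq1 - hsm2
    have hαt : a α ∣ q1 - (algebraMap K R c) ^ (2 * k β + 1) * (s α • q2) := by
      have hd : a α ∣ a β ^ (2 * k β + 1) *
          (q1 - (algebraMap K R c) ^ (2 * k β + 1) * (s α • q2)) :=
        keq ▸ dvd_mul_right _ _
      refine ((haP α).dvd_mul.mp hd).resolve_left fun h => ?_
      exact hne α β (fun h' => hβ h'.symm) ((haP α).dvd_of_dvd_pow h)
    obtain ⟨u, hu⟩ := hαt
    refine ⟨u, mul_left_cancel₀ hα0 ?_⟩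
    rw [keq, hu]; ring

end Statement9
end

section
/- Let α ∈ ℛ₊ and f ∈ ℤ[L]. For every integer m ≥ 1 the following three conditions are equivalent: (i) f − s_α(f) is divisible by (1 − e^α)·(1 − e^{ᾱ})^{m−1} in ℤ[L]; (ii) f − s_α(f) is divisible by (1 − e^{ᾱ})^m in ℤ[L]; (iii) Λ_α(f) is divisible by (1 − e^{ᾱ})^{2⌊m/2⌋} in ℤ[L]. -/
/-!
STATEMENT 11.  Let α ∈ ℛ₊ and f ∈ ℤ[L].  For every integer m ≥ 1 the following three
conditions are equivalent:
(i)   f − s_α(f) is divisible by (1 − e^α)·(1 − e^{ᾱ})^{m−1} in ℤ[L];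
(ii)  f − s_α(f) is divisible by (1 − e^{ᾱ})^m in ℤ[L];
(iii) Λ_α(f) is divisible by (1 − e^{ᾱ})^{2⌊m/2⌋} in ℤ[L].
Here Λ_α(f) is the unique element with (1 − e^α)·Λ_α(f) = f − s_α(f), and ᾱ = α/2 if
α ∈ 2L and ᾱ = α otherwise (encoded by the data `rbar` and the hypothesis `hrbar`).
-/

namespace Statement11

/-- basis element `e^λ` of the group ring ℤ[L]. -/
noncomputable def Ee {L : Type*} [AddCommGroup L] (l : L) : AddMonoidAlgebra ℤ L :=
  AddMonoidAlgebra.single l 1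

/-
Write `p = 1 - e^ᾱ`, so that `α = t • ᾱ` with `t ∈ {1, 2}` and `1 - e^α = p * q` with
`q = 1 + e^ᾱ + ⋯ + e^((t-1)ᾱ) ≡ t (mod p)`. Comparing coefficients along the `ᾱ`-strings of `L`
shows that `p ∣ n * x` forces `p ∣ x` for every integer `n ≠ 0`, because `ᾱ` has infinite order;
hence `p ^ k ∣ q * x ↔ p ^ k ∣ x`, and (i), (ii) are both equivalent to `p ^ (m - 1) ∣ Λ_α(f)`.
For (iii), applying `s_α` to `(1 - e^α) Λ_α(f) = f - s_α f` gives `s_α Λ_α(f) = e^α Λ_α(f)`.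
If `Λ_α(f) = p ^ k * g` with `k` odd, then `s_α p = -e^(-ᾱ) p` yields
`s_α g = -e^((k+t)ᾱ) g`, so `p` divides `g - s_α g ≡ 2 g`, hence `p ∣ g`:
the exact power of `p` dividing `Λ_α(f)` is even.
-/

open AddMonoidAlgebra Finset

lemma ne_zero_of_not_isOfFinAddOrder {G : Type*} [AddMonoid G] {a : G}
    (h : ¬IsOfFinAddOrder a) : a ≠ 0 := by
  rintro rfl
  exact h .zero

section GroupRing

variable {L : Type*} [AddCommGroup L]

lemma Ee_add (a b : L) : Ee (a + b) = Ee a * Ee b := by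
  simp [Ee, single_mul_single]

lemma Ee_zero : Ee (0 : L) = 1 := rfl

lemma Ee_nsmul (n : ℕ) (a : L) : Ee (n • a) = Ee a ^ n := by
  induction n with
  | zero => rw [zero_nsmul, Ee_zero, pow_zero]
  | succ n ih => rw [succ_nsmul, Ee_add, ih, pow_succ]

lemma Ee_mul_Ee_neg (a : L) : Ee a * Ee (-a) = 1 := by
  rw [← Ee_add, add_neg_cancel, Ee_zero]

lemma one_sub_Ee_neg (a : L) : 1 - Ee (-a) = -Ee (-a) * (1 - Ee a) := by
  linear_combination -Ee_mul_Ee_neg a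

lemma one_sub_Ee_dvd_one_sub_Ee_nsmul (c : L) (t : ℕ) : 1 - Ee c ∣ 1 - Ee (t • c) := by
  rw [Ee_nsmul]
  exact one_sub_dvd_one_sub_pow _ _

lemma one_sub_Ee_ne_zero {c : L} (hc : c ≠ 0) : (1 : ℤ[L]) - Ee c ≠ 0 := by
  intro h
  simpa [Ee, one_def, hc.symm] using congrArg (coeff · 0) h

lemma coeff_intCast_mul (n : ℤ) (x : ℤ[L]) (b : L) :
    ((n : ℤ[L]) * x).coeff b = n * x.coeff b := by
  rw [intCast_def, coeff_single_mul_apply, neg_zero, zero_add, Int.cast_id]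

lemma coeff_one_sub_Ee_mul (c : L) (x : ℤ[L]) (b : L) :
    ((1 - Ee c) * x).coeff b = x.coeff b - x.coeff (b - c) := by
  rw [sub_mul, one_mul, coeff_sub, Finsupp.sub_apply, Ee, coeff_single_mul_apply, one_mul,
    neg_add_eq_sub]

lemma intCast_dvd_iff {n : ℤ} {x : ℤ[L]} :
    (n : ℤ[L]) ∣ x ↔ ∀ b, n ∣ x.coeff b := by
  refine ⟨fun ⟨y, hy⟩ b => ⟨y.coeff b, by rw [hy, coeff_intCast_mul]⟩, fun h => ?_⟩
  refine ⟨ofCoeff (x.coeff.mapRange (· / n) (Int.zero_ediv n)), ext (Finsupp.ext fun b => ?_)⟩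
  rw [coeff_intCast_mul, coeff_ofCoeff, Finsupp.mapRange_apply, Int.mul_ediv_cancel' (h b)]

lemma dvd_coeff_of_dvd_coeff_one_sub_Ee_mul {c : L} (hc : ¬IsOfFinAddOrder c) {n : ℤ}
    {x : ℤ[L]} (h : ∀ b, n ∣ ((1 - Ee c) * x).coeff b) (b : L) :
    n ∣ x.coeff b := by
  have htelescope : ∀ k : ℕ, n ∣ x.coeff b - x.coeff (b - k • c) := by
    intro k
    induction k with
    | zero => simp
    | succ k ih =>
      have hk := h (b - k • c)
      rw [coeff_one_sub_Ee_mul, sub_sub, ← succ_nsmul] at hk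
      simpa using dvd_add ih hk
  have hinj : Function.Injective fun k : ℕ => b - k • c :=
    (sub_right_injective).comp (injective_nsmul_iff_not_isOfFinAddOrder.2 hc)
  obtain ⟨_, ⟨k, rfl⟩, hk⟩ :=
    (Set.infinite_range_of_injective hinj).exists_notMem_finset x.coeff.support
  simpa [Finsupp.notMem_support_iff.1 hk] using htelescope k

lemma one_sub_Ee_dvd_of_dvd_intCast_mul {c : L} (hc : ¬IsOfFinAddOrder c) {n : ℤ} (hn : n ≠ 0)
    {x : ℤ[L]} (h : 1 - Ee c ∣ n * x) : 1 - Ee c ∣ x := by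
  obtain ⟨y, hy⟩ := h
  obtain ⟨z, rfl⟩ : (n : ℤ[L]) ∣ y := intCast_dvd_iff.2 <|
    dvd_coeff_of_dvd_coeff_one_sub_Ee_mul hc fun b => by
      rw [← hy]; exact intCast_dvd_iff.1 (dvd_mul_right _ _) b
  have := IsAddTorsionFree.of_isTorsionFree ℤ ℤ[L]
  refine ⟨z, zsmul_right_injective hn ?_⟩
  simp only [zsmul_eq_mul, hy]
  ring

end GroupRing

section Domain

variable {L : Type*} [AddCommGroup L] [IsDomain ℤ[L]]

lemma one_sub_Ee_pow_dvd_of_dvd_geom_sum_mul {c : L} (hc : ¬IsOfFinAddOrder c) {t : ℕ}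
    (ht : t ≠ 0) {k : ℕ} {x : ℤ[L]}
    (h : (1 - Ee c) ^ k ∣ (∑ i ∈ range t, Ee c ^ i) * x) : (1 - Ee c) ^ k ∣ x := by
  have hp := one_sub_Ee_ne_zero (ne_zero_of_not_isOfFinAddOrder hc)
  induction k generalizing x with
  | zero => exact one_dvd x
  | succ k ih =>
    have hsum : 1 - Ee c ∣ (t : ℤ[L]) - ∑ i ∈ range t, Ee c ^ i := by
      have : (t : ℤ[L]) - ∑ i ∈ range t, Ee c ^ i = ∑ i ∈ range t, (1 - Ee c ^ i) := by
        simp [sum_sub_distrib]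
      exact this ▸ dvd_sum fun i _ => one_sub_dvd_one_sub_pow _ i
    have htx : 1 - Ee c ∣ ((t : ℤ) : ℤ[L]) * x := by
      have := dvd_add ((dvd_pow_self _ k.succ_ne_zero).trans h) (hsum.mul_right x)
      rwa [← add_mul, add_sub_cancel, ← Int.cast_natCast] at this
    obtain ⟨y, rfl⟩ := one_sub_Ee_dvd_of_dvd_intCast_mul hc (Int.natCast_ne_zero.2 ht) htx
    rw [pow_succ'] at h ⊢
    rw [mul_left_comm, mul_dvd_mul_iff_left hp] at h
    exact mul_dvd_mul_left _ (ih h)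

lemma one_sub_Ee_pow_succ_dvd_one_sub_Ee_nsmul_mul_iff {c : L} (hc : ¬IsOfFinAddOrder c) {t : ℕ}
    (ht : t ≠ 0) {k : ℕ} {x : ℤ[L]} :
    (1 - Ee c) ^ (k + 1) ∣ (1 - Ee (t • c)) * x ↔ (1 - Ee c) ^ k ∣ x := by
  have hp := one_sub_Ee_ne_zero (ne_zero_of_not_isOfFinAddOrder hc)
  rw [Ee_nsmul, ← mul_neg_geom_sum, pow_succ', mul_assoc, mul_dvd_mul_iff_left hp]
  exact ⟨one_sub_Ee_pow_dvd_of_dvd_geom_sum_mul hc ht, (dvd_mul_of_dvd_right · _)⟩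

variable {W : Type*} [Group W] [MulSemiringAction W ℤ[L]] {w : W}

lemma smul_eq_Ee_mul_of_one_sub_Ee_mul_eq {r : L} (hr : r ≠ 0) (hw : w * w = 1)
    (hwr : w • Ee r = Ee (-r)) {f Λ : ℤ[L]} (hΛ : (1 - Ee r) * Λ = f - w • f) :
    w • Λ = Ee r * Λ := by
  have hwΛ : (1 - Ee (-r)) * w • Λ = w • f - f := by
    rw [← hwr, ← smul_one w, ← smul_sub, ← smul_mul', hΛ, smul_sub, smul_smul, hw, one_smul]
  have key : Ee (-r) * w • Λ = Λ := by
    refine mul_left_cancel₀ (one_sub_Ee_ne_zero hr) ?_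
    rw [one_sub_Ee_neg] at hwΛ
    linear_combination -hwΛ - hΛ
  linear_combination Ee r * key - w • Λ * Ee_mul_Ee_neg r

lemma one_sub_Ee_pow_succ_dvd_of_odd {c : L} (hc : ¬IsOfFinAddOrder c)
    (hwc : w • Ee c = Ee (-c)) (hdvd : ∀ y, 1 - Ee c ∣ y - w • y) {t : ℕ} {x : ℤ[L]}
    (hx : w • x = Ee (t • c) * x) {k : ℕ} (hk : Odd k) (h : (1 - Ee c) ^ k ∣ x) :
    (1 - Ee c) ^ (k + 1) ∣ x := by
  have hp := one_sub_Ee_ne_zero (ne_zero_of_not_isOfFinAddOrder hc)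
  obtain ⟨g, rfl⟩ := h
  have hwp : w • (1 - Ee c) = -Ee (-c) * (1 - Ee c) := by
    rw [smul_sub, smul_one, hwc, one_sub_Ee_neg]
  have hg : -(Ee (-c) ^ k * w • g) = Ee (t • c) * g := by
    refine mul_left_cancel₀ (pow_ne_zero k hp) ?_
    rw [smul_mul', smul_pow', hwp, mul_pow, hk.neg_pow] at hx
    linear_combination hx
  have hwg : w • g = -(Ee ((k + t) • c) * g) := by
    have hu : (Ee c * Ee (-c)) ^ k = 1 := by rw [Ee_mul_Ee_neg, one_pow]
    rw [add_nsmul, Ee_add, Ee_nsmul]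
    linear_combination (-Ee c ^ k) * hg - w • g * hu
  have h2g : 1 - Ee c ∣ ((2 : ℤ) : ℤ[L]) * g := by
    have hsplit : ((2 : ℤ) : ℤ[L]) * g = (g - w • g) + (1 - Ee ((k + t) • c)) * g := by
      rw [hwg]; push_cast; ring
    rw [hsplit]
    exact dvd_add (hdvd g) ((one_sub_Ee_dvd_one_sub_Ee_nsmul c _).mul_right g)
  obtain ⟨g', rfl⟩ := one_sub_Ee_dvd_of_dvd_intCast_mul hc two_ne_zero h2g
  exact ⟨g', by ring⟩

end Domain

lemma pow_two_mul_div_two_dvd_iff {M : Type*} [Monoid M] {a x : M}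
    (h : ∀ k, Odd k → a ^ k ∣ x → a ^ (k + 1) ∣ x) (m : ℕ) :
    a ^ (2 * (m / 2)) ∣ x ↔ a ^ (m - 1) ∣ x := by
  obtain ⟨j, rfl | rfl⟩ := Nat.even_or_odd' m
  · rcases j with _ | i
    · rfl
    have hodd : Odd (2 * (i + 1) - 1) := ⟨i, by omega⟩
    rw [Nat.mul_div_cancel_left _ two_pos]
    refine ⟨(pow_dvd_pow a (by omega)).trans, fun hx => ?_⟩
    simpa only [Nat.sub_add_cancel (by omega : 1 ≤ 2 * (i + 1))] using h _ hodd hx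
  · rw [show 2 * ((2 * j + 1) / 2) = 2 * j + 1 - 1 by omega]

lemma smul_eq_neg_of_eq_nsmul {L W : Type*} [AddCommGroup L] [SMul W L] {s : W}
    {φ : L →+ ℤ} {r : L} (hφ : φ r = 2) (hs : ∀ l, s • l = l - φ l • r) {c : L} {t : ℕ}
    (hrc : r = t • c) : s • c = -c := by
  have htc : t • φ c = 2 := by rw [← map_nsmul, ← hrc, hφ]
  rw [hs, hrc, smul_comm, ← smul_assoc, htc, two_smul]
  abel

theorem statement_11_general
    {L : Type*} [AddCommGroup L] [Module.Free ℤ L]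
    [IsDomain (AddMonoidAlgebra ℤ L)]
    {W : Type*} [Group W] [DistribMulAction W L]
    [MulSemiringAction W (AddMonoidAlgebra ℤ L)]
    (hcomp : ∀ (w : W) (l : L), w • (Ee l) = Ee (w • l))
    {Rp : Type*}
    (r : Rp → L) (cor : Rp → (L →+ ℤ)) (sr : Rp → W)
    (hcor : ∀ α, cor α (r α) = 2)
    (hrefl : ∀ (α) (l : L), sr α • l = l - cor α l • r α)
    (hs2 : ∀ α, sr α * sr α = 1)
    (rbar : Rp → L)
    (hrbar : ∀ α, r α = 2 • rbar α ∨ (rbar α = r α ∧ ∀ l : L, r α ≠ 2 • l))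
    (Lam : Rp → AddMonoidAlgebra ℤ L → AddMonoidAlgebra ℤ L)
    (hLam : ∀ α f, (1 - Ee (r α)) * Lam α f = f - sr α • f)
    (α : Rp) (f : AddMonoidAlgebra ℤ L) (m : ℕ) (hm : 1 ≤ m) :
    (((1 - Ee (r α)) * (1 - Ee (rbar α)) ^ (m - 1) ∣ f - sr α • f) ↔
      ((1 - Ee (rbar α)) ^ m ∣ f - sr α • f)) ∧
    (((1 - Ee (rbar α)) ^ m ∣ f - sr α • f) ↔
      ((1 - Ee (rbar α)) ^ (2 * (m / 2)) ∣ Lam α f)) := by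
  have := IsAddTorsionFree.of_isTorsionFree ℤ L
  obtain ⟨t, ht, hrt⟩ : ∃ t : ℕ, t ≠ 0 ∧ r α = t • rbar α :=
    (hrbar α).elim (fun h => ⟨2, two_ne_zero, h⟩)
      fun h => ⟨1, one_ne_zero, by rw [one_nsmul, h.1]⟩
  have hr : r α ≠ 0 := fun h => by simpa [h] using hcor α
  have hc : ¬IsOfFinAddOrder (rbar α) :=
    not_isOfFinAddOrder_of_isAddTorsionFree fun h => hr (by rw [hrt, h, smul_zero])
  have hΛ := hLam α f
  have hsym : sr α • Lam α f = Ee (r α) * Lam α f :=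
    smul_eq_Ee_mul_of_one_sub_Ee_mul_eq hr (hs2 α)
      (by rw [hcomp, smul_eq_neg_of_eq_nsmul (hcor α) (hrefl α) (one_nsmul _).symm]) hΛ
  have hwc : sr α • Ee (rbar α) = Ee (-rbar α) := by
    rw [hcomp, smul_eq_neg_of_eq_nsmul (hcor α) (hrefl α) hrt]
  have hdvd (y) : 1 - Ee (rbar α) ∣ y - sr α • y :=
    (hrt ▸ one_sub_Ee_dvd_one_sub_Ee_nsmul (rbar α) t).trans ⟨Lam α y, (hLam α y).symm⟩
  have hii :
      (1 - Ee (rbar α)) ^ m ∣ f - sr α • f ↔ (1 - Ee (rbar α)) ^ (m - 1) ∣ Lam α f := by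
    have := one_sub_Ee_pow_succ_dvd_one_sub_Ee_nsmul_mul_iff hc ht (k := m - 1) (x := Lam α f)
    rwa [Nat.sub_add_cancel hm, ← hrt, hΛ] at this
  refine ⟨by rw [hii, ← hΛ, mul_dvd_mul_iff_left (one_sub_Ee_ne_zero hr)], hii.trans ?_⟩
  exact (pow_two_mul_div_two_dvd_iff
    (fun k hk => one_sub_Ee_pow_succ_dvd_of_odd hc hwc hdvd (hrt ▸ hsym) hk) m).symm

theorem statement_11
    {L : Type*} [AddCommGroup L] [Module.Free ℤ L] [Module.Finite ℤ L]
    [IsDomain (AddMonoidAlgebra ℤ L)]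
    {W : Type*} [Group W] [Fintype W] [DistribMulAction W L]
    [MulSemiringAction W (AddMonoidAlgebra ℤ L)]
    (hcomp : ∀ (w : W) (l : L), w • (Ee l) = Ee (w • l))
    {Rp : Type*} [Fintype Rp]
    (r : Rp → L) (cor : Rp → (L →+ ℤ)) (sr : Rp → W)
    (hcor : ∀ α, cor α (r α) = 2)
    (hrefl : ∀ (α) (l : L), sr α • l = l - cor α l • r α)
    (hs2 : ∀ α, sr α * sr α = 1)
    (hred : ∀ α β, r α ≠ 2 • r β ∧ r α ≠ -(2 • r β))
    (rbar : Rp → L)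
    (hrbar : ∀ α, r α = 2 • rbar α ∨ (rbar α = r α ∧ ∀ l : L, r α ≠ 2 • l))
    (Lam : Rp → AddMonoidAlgebra ℤ L → AddMonoidAlgebra ℤ L)
    (hLam : ∀ α f, (1 - Ee (r α)) * Lam α f = f - sr α • f)
    (α : Rp) (f : AddMonoidAlgebra ℤ L) (m : ℕ) (hm : 1 ≤ m) :
    (((1 - Ee (r α)) * (1 - Ee (rbar α)) ^ (m - 1) ∣ f - sr α • f) ↔
      ((1 - Ee (rbar α)) ^ m ∣ f - sr α • f)) ∧
    (((1 - Ee (rbar α)) ^ m ∣ f - sr α • f) ↔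
      ((1 - Ee (rbar α)) ^ (2 * (m / 2)) ∣ Lam α f)) :=
  statement_11_general hcomp r cor sr hcor hrefl hs2 rbar hrbar Lam hLam α f m hm

end Statement11
end

section
/- For every m ∈ 𝓜(W), the quasi-covariant ring 𝐐_m(W) is a finitely generated commutative 𝕜-algebra; in particular, it is Noetherian. -/
/-!
The diagonal copy of `𝕜[V]` lies in `𝐐_m(W)`, and the divisibility conditions are
`𝕜[V]`-linear, so `𝐐_m(W)` is a `𝕜[V]`-subalgebra of the finite `𝕜[V]`-module `∏_{w∈W} 𝕜[V]`.
As `𝕜[V]` is Noetherian, `𝐐_m(W)` is a finite `𝕜[V]`-module, hence a finitely generated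
`𝕜`-algebra by transitivity, and Noetherian by the Hilbert basis theorem.
-/

namespace Statement19

variable {K R W A : Type*}

/-- the quasi-covariant ring `𝐐_m(W)` as a 𝕜-subalgebra of `∏_{w∈W} 𝕜[V]`. -/
def QcovSubalgebra (K : Type*) [CommSemiring K] [CommRing R] [Algebra K R]
    [Group W] [MulSemiringAction W R]
    (a : A → R) (s : A → W) (m : A → ℕ) : Subalgebra K (W → R) where
  carrier := {p | ∀ (α : A) (w : W), a α ^ m α ∣ p (s α * w) - p w}
  one_mem' := by intro α w; simp
  add_mem' := by
    intro p q hp hq α w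
    have h : (p + q) (s α * w) - (p + q) w
        = (p (s α * w) - p w) + (q (s α * w) - q w) := by
      simp only [Pi.add_apply]; ring
    rw [h]; exact dvd_add (hp α w) (hq α w)
  mul_mem' := by
    intro p q hp hq α w
    have h : (p * q) (s α * w) - (p * q) w
        = p (s α * w) * (q (s α * w) - q w) + (p (s α * w) - p w) * q w := by
      simp only [Pi.mul_apply]; ring
    rw [h]
    exact dvd_add (Dvd.dvd.mul_left (hq α w) _) (Dvd.dvd.mul_right (hp α w) _)
  algebraMap_mem' := by
    intro c α w
    have h : (algebraMap K (W → R) c) (s α * w) - (algebraMap K (W → R) c) w = 0 := by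
      simp
    rw [h]
    exact dvd_zero _

theorem Subalgebra.fg_restrictScalars_of_moduleFinite {K R A : Type*} [CommRing K] [CommRing R]
    [CommRing A] [Algebra K R] [Algebra R A] [Algebra K A] [IsScalarTower K R A]
    [Algebra.FiniteType K R] [IsNoetherianRing R] [Module.Finite R A] (T : Subalgebra R A) :
    (T.restrictScalars K).FG := by
  have : Module.Finite R T := Module.Finite.iff_fg.mpr (IsNoetherian.noetherian T.toSubmodule)
  have : Algebra.FiniteType K T := Algebra.FiniteType.trans (S := R) ‹_› (Module.Finite.finiteType _)
  exact (Subalgebra.fg_iff_finiteType _).mpr this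

theorem restrictScalars_qcovSubalgebra [CommSemiring K] [CommRing R]
    [Algebra K R] [Group W] [MulSemiringAction W R] (a : A → R) (s : A → W) (m : A → ℕ) :
    (QcovSubalgebra R a s m).restrictScalars K = QcovSubalgebra K a s m :=
  Subalgebra.ext fun _ => Iff.rfl

theorem statement_19_general
    [Field K] [CommRing R] [Algebra K R]
    [Group W] [Fintype W] [MulSemiringAction W R]
    (hfg : (⊤ : Subalgebra K R).FG)
    (a : A → R) (s : A → W)
    (m : A → ℕ) :
    (QcovSubalgebra K a s m).FG ∧ IsNoetherianRing ↥(QcovSubalgebra K a s m) := by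
  have : Algebra.FiniteType K R := ⟨hfg⟩
  have : IsNoetherianRing R := Algebra.FiniteType.isNoetherianRing K R
  have hQ : (QcovSubalgebra K a s m).FG := by
    rw [← restrictScalars_qcovSubalgebra]
    exact Subalgebra.fg_restrictScalars_of_moduleFinite _
  have : Algebra.FiniteType K (QcovSubalgebra K a s m) := (Subalgebra.fg_iff_finiteType _).mp hQ
  exact ⟨hQ, Algebra.FiniteType.isNoetherianRing K _⟩

theorem statement_19
    [Field K] [CharZero K] [CommRing R] [IsDomain R] [Algebra K R]
    [Group W] [Fintype W] [MulSemiringAction W R] [SMulCommClass W K R]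
    [Fintype A]
    (hfg : (⊤ : Subalgebra K R).FG)
    (a : A → R) (s : A → W)
    (haP : ∀ α, Prime (a α))
    (hne : ∀ α β, α ≠ β → ¬ a α ∣ a β)
    (hs2 : ∀ α, s α * s α = 1)
    (hsa : ∀ α, s α • a α = - a α)
    (hdvd : ∀ (α : A) (p : R), a α ∣ s α • p - p)
    (wA : W → A → A)
    (hwA_one : ∀ α, wA 1 α = α)
    (hwA_mul : ∀ g h α, wA (g * h) α = wA g (wA h α))
    (hws : ∀ w α, s (wA w α) = w * s α * w⁻¹)
    (hwa : ∀ w α, ∃ c : K, c ≠ 0 ∧ w • a α = c • a (wA w α))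
    (m : A → ℕ) (hm : ∀ w α, m (wA w α) = m α) :
    (QcovSubalgebra K a s m).FG ∧ IsNoetherianRing ↥(QcovSubalgebra K a s m) :=
  statement_19_general hfg a s m

end Statement19
end
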